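/- The only pairs of coprime integers (c, d) with 3 ∣ c, c ≠ 0, and c²/3 + d² + (2/√3)·cd·cos(5π/6) = 1 are (c, d) = ±(3, 1) and ±(3, 2). -/

import Mathlib

open Real

lemma Real.cos_five_pi_div_six : cos (5 * π / 6) = -(√3 / 2) := by
  rw [show 5 * π / 6 = π - π / 6 by ring, cos_pi_sub, cos_pi_div_six]

lemma boundary_form_eq (x y : ℝ) :
    x ^ 2 / 3 + y ^ 2 + (2 / √3) * x * y * cos (5 * π / 6) = x ^ 2 / 3 + y ^ 2 - x * y := by
  have hs : √3 ≠ 0 := by positivity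
  rw [Real.cos_five_pi_div_six]
  field_simp
  ring

/-- The form `3e² - 3ed + d²` is positive definite: four times it is `3e² + (2d - 3e)²`. -/
lemma three_mul_sq_sub_add_sq_eq_one_iff {e d : ℤ} (he : e ≠ 0) :
    3 * e ^ 2 - 3 * e * d + d ^ 2 = 1 ↔
      (e = 1 ∧ (d = 1 ∨ d = 2)) ∨ (e = -1 ∧ (d = -1 ∨ d = -2)) := by
  constructor
  · intro h
    have he_sq : e ^ 2 ≤ 1 := by nlinarith [sq_nonneg (2 * d - 3 * e)]
    have he_unit : e = 1 ∨ e = -1 := by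
      have : -1 ≤ e ∧ e ≤ 1 := ⟨by nlinarith, by nlinarith⟩
      omega
    rcases he_unit with rfl | rfl
    · have hd : (d - 1) * (d - 2) = 0 := by linarith
      rcases mul_eq_zero.mp hd with hd | hd <;> omega
    · have hd : (d + 1) * (d + 2) = 0 := by linarith
      rcases mul_eq_zero.mp hd with hd | hd <;> omega
  · rintro (⟨rfl, rfl | rfl⟩ | ⟨rfl, rfl | rfl⟩) <;> norm_num

theorem boundary_pairs_p_three_general (c d : ℤ) (hc3 : 3 ∣ c)
    (hc0 : c ≠ 0) :
    (c : ℝ) ^ 2 / 3 + (d : ℝ) ^ 2 + (2 / Real.sqrt 3) * c * d * Real.cos (5 * π / 6) = 1 ↔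
      ((c, d) = (3, 1) ∨ (c, d) = (-3, -1) ∨ (c, d) = (3, 2) ∨ (c, d) = (-3, -2)) := by
  obtain ⟨e, rfl⟩ := hc3
  have he : e ≠ 0 := by rintro rfl; simp at hc0
  have h_form_cast : ((3 * e : ℤ) : ℝ) ^ 2 / 3 + (d : ℝ) ^ 2 - (3 * e : ℤ) * d =
      ((3 * e ^ 2 - 3 * e * d + d ^ 2 : ℤ) : ℝ) := by
    push_cast
    ring
  rw [boundary_form_eq, h_form_cast, ← Int.cast_one, Int.cast_inj,
    three_mul_sq_sub_add_sq_eq_one_iff he]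
  simp only [Prod.mk.injEq]
  omega

theorem boundary_pairs_p_three (c d : ℤ) (hcop : IsCoprime c d) (hc3 : 3 ∣ c)
    (hc0 : c ≠ 0) :
    (c : ℝ) ^ 2 / 3 + (d : ℝ) ^ 2 + (2 / Real.sqrt 3) * c * d * Real.cos (5 * π / 6) = 1 ↔
      ((c, d) = (3, 1) ∨ (c, d) = (-3, -1) ∨ (c, d) = (3, 2) ∨ (c, d) = (-3, -2)) :=
  boundary_pairs_p_three_general c d hc3 hc0
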